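/- The Jouvelot–Gifford type inference algorithm is unsound: on input ∅ and the expression λ̂f. Λα:type. λx:α. f x, the algorithm succeeds, returning the type (α →x̂ ŷ) →∅ ∀α:type. α →x̂ ŷ together with a set of trivially satisfiable constraints, even though this expression is not typable in the declarative type system; in particular the bound variable α escapes its scope in the returned type. -/

import Mathlib

/-- Kinds: the kind of effects and the kind of types. -/
inductive Kind : Type
| effect
| type

/-- Effects. -/
inductive Eff : Type
| tvar (a : ℕ)
| uvar (x : ℕ)
| pure
| join (e₁ e₂ : Eff)

/-- Types (with a base type Int). -/
inductive Ty : Type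
| tvar (a : ℕ)
| uvar (x : ℕ)
| int
| arrow (t₁ : Ty) (e : Eff) (t₂ : Ty)
| all (a : ℕ) (k : Kind) (t : Ty)

/-- Descriptors: types or effects. -/
inductive Desc : Type
| ty (t : Ty)
| eff (e : Eff)

/-- Expressions. -/
inductive Expr : Type
| var (x : ℕ)
| lit (n : ℤ)
| lam (x : ℕ) (t : Ty) (e : Expr)
| lamU (x : ℕ) (e : Expr)
| app (e₁ e₂ : Expr)
| lamD (a : ℕ) (k : Kind) (e : Expr)
| appD (e : Expr) (d : Desc)
| elet (x : ℕ) (e₁ e₂ : Expr)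

/-- Environment entries: kind assignments and term-variable type assignments. -/
inductive Entry : Type
| kind (a : ℕ) (k : Kind)
| var (x : ℕ) (t : Ty)

abbrev Env := List Entry

def lookupVar : Env → ℕ → Option Ty
| [], _ => none
| Entry.var y t :: Γ, x => if x = y then some t else lookupVar Γ x
| Entry.kind _ _ :: Γ, x => lookupVar Γ x

def lookupKind : Env → ℕ → Option Kind
| [], _ => none
| Entry.kind b k :: Γ, a => if a = b then some k else lookupKind Γ a
| Entry.var _ _ :: Γ, a => lookupKind Γ a

/-- Domain of kind assignments of an environment. -/
def Env.kdom : Env → Finset ℕ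
| [] => ∅
| Entry.kind a _ :: Γ => insert a (Env.kdom Γ)
| Entry.var _ _ :: Γ => Env.kdom Γ

/-- Free type variables of an effect. -/
def Eff.fv : Eff → Finset ℕ
| .tvar a => {a}
| .uvar _ => ∅
| .pure => ∅
| .join e₁ e₂ => e₁.fv ∪ e₂.fv

/-- Free unification variables of an effect. -/
def Eff.fuv : Eff → Finset ℕ
| .tvar _ => ∅
| .uvar x => {x}
| .pure => ∅
| .join e₁ e₂ => e₁.fuv ∪ e₂.fuv

/-- Free type variables of a type. -/
def Ty.fv : Ty → Finset ℕ
| .tvar a => {a}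
| .uvar _ => ∅
| .int => ∅
| .arrow t₁ e t₂ => t₁.fv ∪ e.fv ∪ t₂.fv
| .all a _ t => t.fv.erase a

/-- Free unification variables of a type (including those in effect annotations). -/
def Ty.fuv : Ty → Finset ℕ
| .tvar _ => ∅
| .uvar x => {x}
| .int => ∅
| .arrow t₁ e t₂ => t₁.fuv ∪ e.fuv ∪ t₂.fuv
| .all _ _ t => t.fuv

/-- Bound type variables of a type, as a list of binder occurrences. -/
def Ty.bv : Ty → List ℕ
| .tvar _ => []
| .uvar _ => []
| .int => []
| .arrow t₁ _ t₂ => t₁.bv ++ t₂.bv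
| .all a _ t => a :: t.bv

def Desc.fv : Desc → Finset ℕ
| .ty t => t.fv
| .eff e => e.fv

def Desc.fuv : Desc → Finset ℕ
| .ty t => t.fuv
| .eff e => e.fuv

def Desc.bv : Desc → List ℕ
| .ty t => t.bv
| .eff _ => []

/-- Bound type variables (binder occurrences) of an expression, including binders
occurring in type annotations and descriptors. -/
def Expr.bv : Expr → List ℕ
| .var _ => []
| .lit _ => []
| .lam _ t e => t.bv ++ e.bv
| .lamU _ e => e.bv
| .app e₁ e₂ => e₁.bv ++ e₂.bv
| .lamD a _ e => a :: e.bv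
| .appD e d => e.bv ++ d.bv
| .elet _ e₁ e₂ => e₁.bv ++ e₂.bv

/-- Bound type variables occurring in the types assigned by an environment. -/
def Env.bv : Env → List ℕ
| [] => []
| Entry.kind _ _ :: Γ => Env.bv Γ
| Entry.var _ t :: Γ => t.bv ++ Env.bv Γ

/-- Free unification variables of an environment. -/
def Env.fuv : Env → Finset ℕ
| [] => ∅
| Entry.kind _ _ :: Γ => Env.fuv Γ
| Entry.var _ t :: Γ => t.fuv ∪ Env.fuv Γ

/-- Capturing substitution of a descriptor for a type variable, in effects. -/
def Eff.substC (a : ℕ) (d : Desc) : Eff → Eff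
| .tvar b => if b = a then (match d with | .eff e => e | .ty _ => .tvar b) else .tvar b
| .uvar x => .uvar x
| .pure => .pure
| .join e₁ e₂ => .join (e₁.substC a d) (e₂.substC a d)

/-- Capturing substitution of a descriptor for a type variable, in types:
free occurrences of the variable are replaced literally, no binder is renamed. -/
def Ty.substC (a : ℕ) (d : Desc) : Ty → Ty
| .tvar b => if b = a then (match d with | .ty t => t | .eff _ => .tvar b) else .tvar b
| .uvar x => .uvar x
| .int => .int
| .arrow t₁ e t₂ => .arrow (t₁.substC a d) (e.substC a d) (t₂.substC a d)
| .all b k t => if b = a then .all b k t else .all b k (t.substC a d)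

/-- Capturing renaming of a type variable in effects. -/
def Eff.ren (a b : ℕ) : Eff → Eff := Eff.substC a (.eff (.tvar b))

/-- Capturing renaming of a type variable in types. -/
def Ty.ren (a b : ℕ) : Ty → Ty
| .tvar c => if c = a then .tvar b else .tvar c
| .uvar x => .uvar x
| .int => .int
| .arrow t₁ e t₂ => .arrow (t₁.ren a b) (e.ren a b) (t₂.ren a b)
| .all c k t => if c = a then .all c k t else .all c k (t.ren a b)

/-- Capturing substitution of a descriptor for a unification variable, in effects. -/
def Eff.substU (x : ℕ) (d : Desc) : Eff → Eff
| .tvar a => .tvar a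
| .uvar y => if y = x then (match d with | .eff e => e | .ty _ => .uvar y) else .uvar y
| .pure => .pure
| .join e₁ e₂ => .join (e₁.substU x d) (e₂.substU x d)

/-- Capturing substitution of a descriptor for a unification variable, in types:
no binder is renamed, so bound variables may capture free variables of the
substituted descriptor. -/
def Ty.substU (x : ℕ) (d : Desc) : Ty → Ty
| .tvar a => .tvar a
| .uvar y => if y = x then (match d with | .ty t => t | .eff _ => .uvar y) else .uvar y
| .int => .int
| .arrow t₁ e t₂ => .arrow (t₁.substU x d) (e.substU x d) (t₂.substU x d)
| .all a k t => .all a k (t.substU x d)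

/-- Substitutions mapping unification variables to descriptors. -/
abbrev Subst := ℕ → Option Desc

def idSubst : Subst := fun _ => none

def Subst.single (x : ℕ) (d : Desc) : Subst := fun y => if y = x then some d else none

def Eff.applyS (θ : Subst) : Eff → Eff
| .tvar a => .tvar a
| .uvar x => match θ x with | some (.eff e) => e | _ => .uvar x
| .pure => .pure
| .join e₁ e₂ => .join (e₁.applyS θ) (e₂.applyS θ)

def Ty.applyS (θ : Subst) : Ty → Ty
| .tvar a => .tvar a
| .uvar x => match θ x with | some (.ty t) => t | _ => .uvar x
| .int => .int
| .arrow t₁ e t₂ => .arrow (t₁.applyS θ) (e.applyS θ) (t₂.applyS θ)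
| .all a k t => .all a k (t.applyS θ)

def Desc.applyS (θ : Subst) : Desc → Desc
| .ty t => .ty (t.applyS θ)
| .eff e => .eff (e.applyS θ)

def Subst.comp (θ₂ θ₁ : Subst) : Subst :=
  fun x => match θ₁ x with
  | some d => some (d.applyS θ₂)
  | none => θ₂ x

def Env.applyS (θ : Subst) : Env → Env :=
  List.map (fun en => match en with
    | Entry.kind a k => Entry.kind a k
    | Entry.var x t => Entry.var x (t.applyS θ))

/-- Effect equivalence: least congruence containing the laws of an idempotent
commutative monoid with identity ∅ and operation ∪. -/
inductive EffEquiv : Eff → Eff → Prop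
| refl (e) : EffEquiv e e
| symm {e₁ e₂} : EffEquiv e₁ e₂ → EffEquiv e₂ e₁
| trans {e₁ e₂ e₃} : EffEquiv e₁ e₂ → EffEquiv e₂ e₃ → EffEquiv e₁ e₃
| congr {e₁ e₁' e₂ e₂'} : EffEquiv e₁ e₁' → EffEquiv e₂ e₂' →
    EffEquiv (.join e₁ e₂) (.join e₁' e₂')
| assoc (e₁ e₂ e₃) : EffEquiv (.join (.join e₁ e₂) e₃) (.join e₁ (.join e₂ e₃))
| comm (e₁ e₂) : EffEquiv (.join e₁ e₂) (.join e₂ e₁)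
| idem (e) : EffEquiv (.join e e) e
| pureId (e) : EffEquiv (.join .pure e) e

/-- Type equivalence (α-equivalence): least congruence respecting effect
equivalence in arrows and allowing renaming of ∀-bound variables. -/
inductive TyEquiv : Ty → Ty → Prop
| refl (t) : TyEquiv t t
| symm {t₁ t₂} : TyEquiv t₁ t₂ → TyEquiv t₂ t₁
| trans {t₁ t₂ t₃} : TyEquiv t₁ t₂ → TyEquiv t₂ t₃ → TyEquiv t₁ t₃
| arrow {t₁ t₁' t₂ t₂' e e'} : TyEquiv t₁ t₁' → EffEquiv e e' → TyEquiv t₂ t₂' →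
    TyEquiv (.arrow t₁ e t₂) (.arrow t₁' e' t₂')
| all {t t'} (a : ℕ) (k : Kind) : TyEquiv t t' → TyEquiv (.all a k t) (.all a k t')
| alpha {t : Ty} (a b : ℕ) (k : Kind) : b ∉ t.fv → b ∉ t.bv →
    TyEquiv (.all a k t) (.all b k (t.ren a b))

/-- Monomorphic types. -/
inductive Mono : Ty → Prop
| tvar (a : ℕ) : Mono (.tvar a)
| uvar (x : ℕ) : Mono (.uvar x)
| int : Mono .int
| arrow {t₁ t₂ : Ty} (e : Eff) : Mono t₁ → Mono t₂ → Mono (.arrow t₁ e t₂)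

/-- Kinding judgment Γ ⊢ δ : κ. -/
inductive Kinding : Env → Desc → Kind → Prop
| varTy {Γ a} : lookupKind Γ a = some .type → Kinding Γ (.ty (.tvar a)) .type
| varEff {Γ a} : lookupKind Γ a = some .effect → Kinding Γ (.eff (.tvar a)) .effect
| int {Γ} : Kinding Γ (.ty .int) .type
| arrow {Γ t₁ t₂ e} : Kinding Γ (.ty t₁) .type → Kinding Γ (.ty t₂) .type →
    Kinding Γ (.eff e) .effect → Kinding Γ (.ty (.arrow t₁ e t₂)) .type
| all {Γ a k t} : Kinding (Entry.kind a k :: Γ) (.ty t) .type →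
    Kinding Γ (.ty (.all a k t)) .type
| pure {Γ} : Kinding Γ (.eff .pure) .effect
| join {Γ e₁ e₂} : Kinding Γ (.eff e₁) .effect → Kinding Γ (.eff e₂) .effect →
    Kinding Γ (.eff (.join e₁ e₂)) .effect

def Desc.tyOr (d : Desc) (t : Ty) : Ty :=
  match d with
  | .ty t' => t'
  | .eff _ => t

/-- Capture-avoiding substitution of a descriptor for a type variable, as a
relation: {a ↦ d} τ = τ', with binders renamed as needed to avoid capture. -/
inductive SubstCA (a : ℕ) (d : Desc) : Ty → Ty → Prop
| tvar_eq : SubstCA a d (.tvar a) (d.tyOr (.tvar a))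
| tvar_ne {b} : b ≠ a → SubstCA a d (.tvar b) (.tvar b)
| uvar (x) : SubstCA a d (.uvar x) (.uvar x)
| int : SubstCA a d .int .int
| arrow {t₁ t₁' t₂ t₂' e} : SubstCA a d t₁ t₁' → SubstCA a d t₂ t₂' →
    SubstCA a d (.arrow t₁ e t₂) (.arrow t₁' (e.substC a d) t₂')
| all_eq {k t} : SubstCA a d (.all a k t) (.all a k t)
| all_ne {b k t t'} : b ≠ a → b ∉ d.fv → SubstCA a d t t' →
    SubstCA a d (.all b k t) (.all b k t')
| all_ren {b c k t t'} : b ≠ a → c ≠ a → c ∉ d.fv → c ∉ t.fv → c ∉ t.bv →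
    SubstCA a d (t.ren b c) t' → SubstCA a d (.all b k t) (.all c k t')

/-- The declarative type system (with the restored well-formedness premises),
including the rules for unannotated lambdas, integer literals and let-bindings. -/
inductive Typing : Env → Expr → Ty → Eff → Prop
| var {Γ x τ} : lookupVar Γ x = some τ → Typing Γ (.var x) τ .pure
| lit {Γ n} : Typing Γ (.lit n) .int .pure
| lam {Γ x τ₁ τ₂ e ε} : Kinding Γ (.ty τ₁) .type →
    Typing (Entry.var x τ₁ :: Γ) e τ₂ ε →
    Typing Γ (.lam x τ₁ e) (.arrow τ₁ ε τ₂) .pure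
| lamU {Γ x τ₁ τ₂ e ε} : Kinding Γ (.ty τ₁) .type → Mono τ₁ →
    Typing (Entry.var x τ₁ :: Γ) e τ₂ ε →
    Typing Γ (.lamU x e) (.arrow τ₁ ε τ₂) .pure
| app {Γ e₁ e₂ τ₁ τ₂ ε ε₁ ε₂} : Typing Γ e₁ (.arrow τ₂ ε τ₁) ε₁ →
    Typing Γ e₂ τ₂ ε₂ →
    Typing Γ (.app e₁ e₂) τ₁ (.join ε₁ (.join ε₂ ε))
| lamD {Γ a k e τ} : Typing (Entry.kind a k :: Γ) e τ .pure →
    Typing Γ (.lamD a k e) (.all a k τ) .pure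
| appD {Γ e a k τ τ' δ ε} : Typing Γ e (.all a k τ) ε → Kinding Γ δ k →
    SubstCA a δ τ τ' → Typing Γ (.appD e δ) τ' ε
| elet {Γ x e₁ e₂ τ₁ τ₂ ε₁ ε₂} : Typing Γ e₁ τ₁ ε₁ →
    Typing (Entry.var x τ₁ :: Γ) e₂ τ₂ ε₂ →
    Typing Γ (.elet x e₁ e₂) τ₂ (.join ε₁ ε₂)
| conv {Γ e τ₁ τ₂ ε₁ ε₂} : Typing Γ e τ₁ ε₁ → TyEquiv τ₁ τ₂ → EffEquiv ε₁ ε₂ →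
    Typing Γ e τ₂ ε₂

/-- The simplified declarative type system: the system of the figure without
the rule T-LamU (and without let-bindings). -/
inductive TypingND : Env → Expr → Ty → Eff → Prop
| var {Γ x τ} : lookupVar Γ x = some τ → TypingND Γ (.var x) τ .pure
| lit {Γ n} : TypingND Γ (.lit n) .int .pure
| lam {Γ x τ₁ τ₂ e ε} : Kinding Γ (.ty τ₁) .type →
    TypingND (Entry.var x τ₁ :: Γ) e τ₂ ε →
    TypingND Γ (.lam x τ₁ e) (.arrow τ₁ ε τ₂) .pure
| app {Γ e₁ e₂ τ₁ τ₂ ε ε₁ ε₂} : TypingND Γ e₁ (.arrow τ₂ ε τ₁) ε₁ →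
    TypingND Γ e₂ τ₂ ε₂ →
    TypingND Γ (.app e₁ e₂) τ₁ (.join ε₁ (.join ε₂ ε))
| lamD {Γ a k e τ} : TypingND (Entry.kind a k :: Γ) e τ .pure →
    TypingND Γ (.lamD a k e) (.all a k τ) .pure
| appD {Γ e a k τ τ' δ ε} : TypingND Γ e (.all a k τ) ε → Kinding Γ δ k →
    SubstCA a δ τ τ' → TypingND Γ (.appD e δ) τ' ε
| conv {Γ e τ₁ τ₂ ε₁ ε₂} : TypingND Γ e τ₁ ε₁ → TyEquiv τ₁ τ₂ → EffEquiv ε₁ ε₂ →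
    TypingND Γ e τ₂ ε₂

/-- τ has locally unique bound variables w.r.t. a domain of variables:
no binder in τ shadows another binder of τ, and no binder is in the domain. -/
def luTy (dom : Finset ℕ) : Ty → Prop
| .tvar _ => True
| .uvar _ => True
| .int => True
| .arrow t₁ _ t₂ => luTy dom t₁ ∧ luTy dom t₂
| .all a _ t => a ∉ dom ∧ luTy (insert a dom) t

def luDesc (dom : Finset ℕ) : Desc → Prop
| .ty t => luTy dom t
| .eff _ => True

/-- An environment has locally unique bound variables w.r.t. itself. -/
def luEnv (Γ : Env) : Prop := ∀ x τ, Entry.var x τ ∈ Γ → luTy Γ.kdom τ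

/-- e has globally unique bound variables w.r.t. a domain: every binder occurs
at most once in e and no binder is in the domain. -/
def guExpr (dom : Finset ℕ) (e : Expr) : Prop :=
  e.bv.Nodup ∧ ∀ a ∈ e.bv, a ∉ dom

/-- The simple type inference algorithm (for the calculus without unannotated
lambdas), using capturing substitution in the type application case. -/
inductive SInfer : Env → Expr → Ty → Eff → Prop
| var {Γ x τ} : lookupVar Γ x = some τ → SInfer Γ (.var x) τ .pure
| lit {Γ n} : SInfer Γ (.lit n) .int .pure
| lam {Γ x τ τ' e ε} : Kinding Γ (.ty τ) .type →
    SInfer (Entry.var x τ :: Γ) e τ' ε →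
    SInfer Γ (.lam x τ e) (.arrow τ ε τ') .pure
| app {Γ e₁ e₂ τa τ₁ τ₂ ε ε₁ ε₂} : SInfer Γ e₁ (.arrow τa ε τ₁) ε₁ →
    SInfer Γ e₂ τ₂ ε₂ → TyEquiv τa τ₂ →
    SInfer Γ (.app e₁ e₂) τ₁ (.join ε₁ (.join ε₂ ε))
| lamD {Γ a k e τ ε} : SInfer (Entry.kind a k :: Γ) e τ ε → EffEquiv ε .pure →
    SInfer Γ (.lamD a k e) (.all a k τ) .pure
| appD {Γ e a k τ δ ε} : SInfer Γ e (.all a k τ) ε → Kinding Γ δ k →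
    SInfer Γ (.appD e δ) (τ.substC a δ) ε

/-- The algebraic unification algorithm, as a relation. In the ∀-case a fresh
variable is chosen and both bound variables are renamed to it (capturing
renaming). Effect unification is delayed into constraints. -/
inductive Unify : Ty → Ty → Subst → List (Eff × Eff) → Prop
| tvar (a) : Unify (.tvar a) (.tvar a) idSubst []
| int : Unify .int .int idSubst []
| uvarRefl (x) : Unify (.uvar x) (.uvar x) idSubst []
| uvarL {x τ} : x ∉ τ.fuv → Mono τ → Unify (.uvar x) τ (Subst.single x (.ty τ)) []
| uvarR {x τ} : x ∉ τ.fuv → Mono τ → Unify τ (.uvar x) (Subst.single x (.ty τ)) []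
| arrow {t₁ t₂ t₁' t₂' e₁ e₂ θ₁ θ₂ C₁ C₂} :
    Unify t₁ t₂ θ₁ C₁ →
    Unify (t₁'.applyS θ₁) (t₂'.applyS θ₁) θ₂ C₂ →
    Unify (.arrow t₁ e₁ t₁') (.arrow t₂ e₂ t₂') (θ₂.comp θ₁)
      (C₁ ++ C₂ ++ [(e₁, e₂)])
| all {a₁ a₂ b k t₁ t₂ θ C} :
    b ∉ t₁.fv ∪ t₂.fv → b ∉ t₁.bv → b ∉ t₂.bv →
    Unify (t₁.ren a₁ b) (t₂.ren a₂ b) θ C →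
    Unify (.all a₁ k t₁) (.all a₂ k t₂) θ C

/-- Models: partial maps from effect unification variables to effects. -/
abbrev EModel := ℕ → Option Eff

/-- The identity substitution, as a model. -/
def idModel : EModel := fun _ => none

def Eff.applyM (μ : EModel) : Eff → Eff
| .tvar a => .tvar a
| .uvar x => (μ x).getD (.uvar x)
| .pure => .pure
| .join e₁ e₂ => .join (e₁.applyM μ) (e₂.applyM μ)

def Ty.applyM (μ : EModel) : Ty → Ty
| .tvar a => .tvar a
| .uvar x => .uvar x
| .int => .int
| .arrow t₁ e t₂ => .arrow (t₁.applyM μ) (e.applyM μ) (t₂.applyM μ)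
| .all a k t => .all a k (t.applyM μ)

/-- A model maps (effect) unification variables to ground effects. -/
def IsModel (μ : EModel) : Prop := ∀ x e, μ x = some e → Eff.fuv e = ∅

/-- μ ⊨ C : the model equates both sides of every constraint up to
effect equivalence. -/
def Models (μ : EModel) (C : List (Eff × Eff)) : Prop :=
  ∀ p ∈ C, EffEquiv (Eff.applyM μ p.1) (Eff.applyM μ p.2)

/-- Atomic identifiers (type variables and unification variables) of an effect. -/
def Eff.ids : Eff → Finset (ℕ ⊕ ℕ)
| .tvar a => {Sum.inl a}
| .uvar x => {Sum.inr x}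
| .pure => ∅
| .join e₁ e₂ => e₁.ids ∪ e₂.ids

/-- Free identifiers (type variables and unification variables) of a type. -/
def Ty.ids : Ty → Finset (ℕ ⊕ ℕ)
| .tvar a => {Sum.inl a}
| .uvar x => {Sum.inr x}
| .int => ∅
| .arrow t₁ e t₂ => t₁.ids ∪ e.ids ∪ t₂.ids
| .all a _ t => t.ids \ {Sum.inl a}

def constrIds (C : List (Eff × Eff)) : Finset (ℕ ⊕ ℕ) :=
  C.foldr (fun p s => p.1.ids ∪ p.2.ids ∪ s) ∅

/-- Free identifiers of an environment (domain of kind assignments and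
identifiers of assigned types). -/
def Env.ids : Env → Finset (ℕ ⊕ ℕ)
| [] => ∅
| Entry.kind a _ :: Γ => insert (Sum.inl a) (Env.ids Γ)
| Entry.var _ t :: Γ => t.ids ∪ Env.ids Γ

/-- Map identifiers of an effect through a function. -/
def Eff.mapIds (g : ℕ ⊕ ℕ → Eff) : Eff → Eff
| .tvar a => g (Sum.inl a)
| .uvar x => g (Sum.inr x)
| .pure => .pure
| .join e₁ e₂ => .join (e₁.mapIds g) (e₂.mapIds g)

/-- The Jouvelot–Gifford type-and-effect reconstruction algorithm, as a
relation R(Γ, e) = (τ, ε, θ, C); freshness of generated variables is expressed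
relative to the data available at the corresponding point. -/
inductive RInfer : Env → Expr → Ty → Eff → Subst → List (Eff × Eff) → Prop
| var {Γ x τ} : lookupVar Γ x = some τ → RInfer Γ (.var x) τ .pure idSubst []
| lit {Γ n} : RInfer Γ (.lit n) .int .pure idSubst []
| lam {Γ x τ τ' e ε θ C} : Kinding Γ (.ty τ) .type →
    RInfer (Entry.var x τ :: Γ) e τ' ε θ C →
    RInfer Γ (.lam x τ e) (.arrow τ ε τ') .pure θ C
| lamU {Γ x z e τ ε θ C} :
    Sum.inr z ∉ Env.ids Γ →
    RInfer (Entry.var x (.uvar z) :: Γ) e τ ε θ C →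
    RInfer Γ (.lamU x e) (.arrow (Ty.applyS θ (.uvar z)) ε τ) .pure θ C
| app {Γ e₁ e₂ τ₁ τ₂ ε₁ ε₂ θ₁ θ₂ θ₃ C₁ C₂ C₃ xt xe} :
    RInfer Γ e₁ τ₁ ε₁ θ₁ C₁ →
    RInfer (Env.applyS θ₁ Γ) e₂ τ₂ ε₂ θ₂ C₂ →
    xt ≠ xe →
    Sum.inr xt ∉ Env.ids Γ ∪ τ₁.ids ∪ τ₂.ids ∪ ε₁.ids ∪ ε₂.ids ∪ constrIds C₁ ∪ constrIds C₂ →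
    Sum.inr xe ∉ Env.ids Γ ∪ τ₁.ids ∪ τ₂.ids ∪ ε₁.ids ∪ ε₂.ids ∪ constrIds C₁ ∪ constrIds C₂ →
    Unify (τ₁.applyS θ₂) (.arrow τ₂ (.uvar xe) (.uvar xt)) θ₃ C₃ →
    RInfer Γ (.app e₁ e₂) (Ty.applyS θ₃ (.uvar xt))
      (.join ε₁ (.join ε₂ (.uvar xe))) ((θ₃.comp θ₂).comp θ₁) (C₁ ++ C₂ ++ C₃)
| lamD {Γ a k e τ ε θ C C' b} {f : ℕ ⊕ ℕ → ℕ} {g : ℕ ⊕ ℕ → Eff} :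
    RInfer (Entry.kind a k :: Γ) e τ ε θ C →
    C' = (ε, Eff.pure) :: C →
    Sum.inl b ∉ constrIds C' ∪ Env.ids (Env.applyS θ (Entry.kind a k :: Γ)) ∪ τ.ids →
    (∀ i ∈ constrIds C' \ Env.ids (Env.applyS θ (Entry.kind a k :: Γ)),
      Sum.inr (f i) ∉ constrIds C' ∪ Env.ids (Env.applyS θ (Entry.kind a k :: Γ)) ∪ τ.ids) →
    Set.InjOn f ↑(constrIds C' \ Env.ids (Env.applyS θ (Entry.kind a k :: Γ))) →
    g = (fun i => if i = Sum.inl a then Eff.tvar b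
      else if i ∈ constrIds C' \ Env.ids (Env.applyS θ (Entry.kind a k :: Γ))
        then Eff.uvar (f i)
        else match i with | Sum.inl t => Eff.tvar t | Sum.inr u => Eff.uvar u) →
    RInfer Γ (.lamD a k e) (.all a k τ) .pure θ
      ((C'.map (fun p => (Eff.mapIds g p.1, Eff.mapIds g p.2))) ++ C')
| appD {Γ e a k τ ε θ C δ} :
    RInfer Γ e (.all a k τ) ε θ C →
    Kinding Γ δ k →
    RInfer Γ (.appD e δ) (τ.substC a δ) ε θ
      (C.map (fun p => (p.1.substC a δ, p.2.substC a δ)))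

/-- ∀-free types. -/
def noForall : Ty → Prop
| .all _ _ _ => False
| .arrow t₁ _ t₂ => noForall t₁ ∧ noForall t₂
| _ => True

/-! Declaratively, `f` must receive a closed monotype `τ₁` (it is kinded in the empty
environment), yet applying it to `x : α` forces `α` into the free variables of `τ₁`, because
type equivalence preserves free type variables. The algorithm instead gives `f` a fresh
unification variable, which unification later instantiates with `α →x̂ ŷ` *inside* the scope
of `Λα`; since the `Λ` case only checks the effect constraints, `α` leaks into the argument type
of the result. -/

theorem EffEquiv.fv_eq {e₁ e₂ : Eff} (h : EffEquiv e₁ e₂) : e₁.fv = e₂.fv := by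
  induction h with
  | refl => rfl
  | symm _ ih => exact ih.symm
  | trans _ _ ih₁ ih₂ => exact ih₁.trans ih₂
  | congr _ _ ih₁ ih₂ => simp [Eff.fv, ih₁, ih₂]
  | assoc => simp [Eff.fv, Finset.union_assoc]
  | comm => simp [Eff.fv, Finset.union_comm]
  | idem => simp [Eff.fv]
  | pureId => simp [Eff.fv]

theorem Eff.mem_fv_ren (a b c : ℕ) (e : Eff) :
    c ∈ (e.ren a b).fv ↔ c = b ∧ a ∈ e.fv ∨ c ≠ a ∧ c ∈ e.fv := by
  induction e with
  | tvar d =>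
    by_cases hd : d = a
    · simp [Eff.ren, Eff.substC, Eff.fv, hd]
    · simp only [Eff.ren, Eff.substC, Eff.fv, hd, ↓reduceIte, Finset.mem_singleton]
      omega
  | join e₁ e₂ ih₁ ih₂ =>
    simp only [Eff.ren, Eff.substC, Eff.fv, Finset.mem_union] at *
    rw [ih₁, ih₂]
    tauto
  | _ => simp [Eff.ren, Eff.substC, Eff.fv]

theorem Ty.mem_fv_ren {a b : ℕ} {t : Ty} (hb : b ∉ t.bv) (c : ℕ) :
    c ∈ (t.ren a b).fv ↔ c = b ∧ a ∈ t.fv ∨ c ≠ a ∧ c ∈ t.fv := by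
  induction t with
  | tvar d =>
    by_cases hd : d = a
    · simp [Ty.ren, Ty.fv, hd]
    · simp only [Ty.ren, Ty.fv, hd, ↓reduceIte, Finset.mem_singleton]
      omega
  | arrow t₁ e t₂ ih₁ ih₂ =>
    simp only [Ty.bv, List.mem_append, not_or] at hb
    simp only [Ty.ren, Ty.fv, Finset.mem_union, ih₁ hb.1, ih₂ hb.2, Eff.mem_fv_ren]
    clear ih₁ ih₂
    tauto
  | all d k t ih =>
    simp only [Ty.bv, List.mem_cons, not_or] at hb
    by_cases hd : d = a
    · subst hd
      simp only [Ty.ren, ↓reduceIte, Ty.fv, Finset.mem_erase]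
      tauto
    · simp only [Ty.ren, hd, ↓reduceIte, Ty.fv, Finset.mem_erase, ih hb.2]
      clear ih
      rcases eq_or_ne c b with rfl | hcb
      · have hcd := hb.1
        simp only [true_and]
        tauto
      · simp only [hcb, false_and, false_or]
        tauto
  | _ => simp [Ty.ren, Ty.fv]

theorem TyEquiv.fv_eq {t₁ t₂ : Ty} (h : TyEquiv t₁ t₂) : t₁.fv = t₂.fv := by
  induction h with
  | refl => rfl
  | symm _ ih => exact ih.symm
  | trans _ _ ih₁ ih₂ => exact ih₁.trans ih₂
  | arrow _ he _ ih₁ ih₂ => simp [Ty.fv, ih₁, ih₂, he.fv_eq]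
  | all _ _ _ ih => simp [Ty.fv, ih]
  | alpha a b k hfv hbv =>
    ext c
    simp only [Ty.fv, Finset.mem_erase, Ty.mem_fv_ren hbv]
    grind

theorem mem_kdom_of_lookupKind_eq_some {Γ : Env} {a : ℕ} {k : Kind}
    (h : lookupKind Γ a = some k) : a ∈ Γ.kdom := by
  induction Γ with
  | nil => simp [lookupKind] at h
  | cons en Γ ih =>
    cases en with
    | kind b _ =>
      simp only [lookupKind] at h
      split_ifs at h with hab
      · simp [Env.kdom, hab]
      · simp [Env.kdom, ih h]
    | var => simpa [Env.kdom] using ih h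

theorem Kinding.fv_subset_kdom {Γ : Env} {d : Desc} {k : Kind} (h : Kinding Γ d k) :
    d.fv ⊆ Γ.kdom := by
  induction h with
  | varTy h | varEff h => simpa [Desc.fv, Ty.fv, Eff.fv] using mem_kdom_of_lookupKind_eq_some h
  | int | pure => simp [Desc.fv, Ty.fv, Eff.fv]
  | arrow _ _ _ ih₁ ih₂ ih₃ =>
    simp only [Desc.fv, Ty.fv] at *
    exact Finset.union_subset (Finset.union_subset ih₁ ih₃) ih₂
  | all _ ih =>
    simp only [Desc.fv, Ty.fv, Env.kdom] at *
    exact Finset.subset_insert_iff.mp ih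
  | join _ _ ih₁ ih₂ =>
    simp only [Desc.fv, Eff.fv] at *
    exact Finset.union_subset ih₁ ih₂

namespace Typing

variable {Γ : Env} {τ : Ty} {ε : Eff}

theorem lamU_inv {x : ℕ} {b : Expr} (h : Typing Γ (.lamU x b) τ ε) :
    ∃ τ₁ τ₂ ε', Kinding Γ (.ty τ₁) .type ∧ Typing (Entry.var x τ₁ :: Γ) b τ₂ ε' := by
  generalize he : Expr.lamU x b = e at h
  induction h with
  | lamU hk _ hb => cases he; exact ⟨_, _, _, hk, hb⟩
  | conv _ _ _ ih => exact ih he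
  | _ => cases he

theorem lamD_inv {a : ℕ} {k : Kind} {b : Expr} (h : Typing Γ (.lamD a k b) τ ε) :
    ∃ τ' ε', Typing (Entry.kind a k :: Γ) b τ' ε' := by
  generalize he : Expr.lamD a k b = e at h
  induction h with
  | lamD hb => cases he; exact ⟨_, _, hb⟩
  | conv _ _ _ ih => exact ih he
  | _ => cases he

theorem lam_inv {x : ℕ} {t : Ty} {b : Expr} (h : Typing Γ (.lam x t b) τ ε) :
    ∃ τ' ε', Typing (Entry.var x t :: Γ) b τ' ε' := by
  generalize he : Expr.lam x t b = e at h
  induction h with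
  | lam _ hb => cases he; exact ⟨_, _, hb⟩
  | conv _ _ _ ih => exact ih he
  | _ => cases he

theorem app_inv {e₁ e₂ : Expr} (h : Typing Γ (.app e₁ e₂) τ ε) :
    ∃ τa εf τr ε₁ ε₂, Typing Γ e₁ (.arrow τa εf τr) ε₁ ∧ Typing Γ e₂ τa ε₂ := by
  generalize he : Expr.app e₁ e₂ = e at h
  induction h with
  | app h₁ h₂ => cases he; exact ⟨_, _, _, _, _, h₁, h₂⟩
  | conv _ _ _ ih => exact ih he
  | _ => cases he

theorem var_inv {x : ℕ} (h : Typing Γ (.var x) τ ε) :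
    ∃ τ₀, lookupVar Γ x = some τ₀ ∧ TyEquiv τ₀ τ := by
  generalize he : Expr.var x = e at h
  induction h with
  | var h => cases he; exact ⟨_, h, .refl _⟩
  | conv _ hτ _ ih =>
    obtain ⟨τ₀, hx, hτ₀⟩ := ih he
    exact ⟨τ₀, hx, hτ₀.trans hτ⟩
  | _ => cases he

theorem fv_subset_of_app_var {f x : ℕ} {τf τx : Ty} (h : Typing Γ (.app (.var f) (.var x)) τ ε)
    (hf : lookupVar Γ f = some τf) (hx : lookupVar Γ x = some τx) : τx.fv ⊆ τf.fv := by
  obtain ⟨τa, εf, τr, _, _, hf', hx'⟩ := app_inv h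
  obtain ⟨_, hf₀, hτf⟩ := var_inv hf'
  obtain ⟨_, hx₀, hτx⟩ := var_inv hx'
  rw [hf, Option.some_inj] at hf₀
  rw [hx, Option.some_inj] at hx₀
  subst hf₀ hx₀
  rw [hτf.fv_eq, hτx.fv_eq, Ty.fv]
  exact Finset.subset_union_left.trans Finset.subset_union_left

end Typing

theorem Models.of_forall_fst_eq_snd {C : List (Eff × Eff)} (hC : ∀ p ∈ C, p.1 = p.2)
    (μ : EModel) : Models μ C :=
  fun p hp => hC p hp ▸ .refl _

/-- `λ̂f. Λα:type. λx:α. f x`, with `f = 0`, `x = 1` and `α = 0`. -/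
def escapeExpr : Expr :=
  .lamU 0 (.lamD 0 .type (.lam 1 (.tvar 0) (.app (.var 0) (.var 1))))

theorem not_typable_escapeExpr : ¬ ∃ τ ε, Typing [] escapeExpr τ ε := by
  rintro ⟨τ, ε, h⟩
  obtain ⟨τf, _, _, hτf, h⟩ := h.lamU_inv
  obtain ⟨_, _, h⟩ := h.lamD_inv
  obtain ⟨_, _, h⟩ := h.lam_inv
  have hα : 0 ∈ τf.fv := h.fv_subset_of_app_var rfl rfl (by simp [Ty.fv])
  simpa [Desc.fv, Env.kdom] using hτf.fv_subset_kdom hα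

/-- The run of the algorithm with `ẑ = 0`, `ŷ = x̂ₜ = 1`, `x̂ = x̂ₑ = 2`; the fresh constant of the
`Λ` case is `1`. -/
theorem rInfer_escapeExpr :
    RInfer [] escapeExpr
      (.arrow (.arrow (.tvar 0) (.uvar 2) (.uvar 1)) .pure
        (.all 0 .type (.arrow (.tvar 0) (.join .pure (.join .pure (.uvar 2))) (.uvar 1))))
      .pure (((Subst.single 0 (.ty (.arrow (.tvar 0) (.uvar 2) (.uvar 1)))).comp idSubst).comp
        idSubst)
      [(.pure, .pure), (.pure, .pure)] := by
  have happ : RInfer [Entry.var 1 (.tvar 0), Entry.kind 0 .type, Entry.var 0 (.uvar 0)]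
      (.app (.var 0) (.var 1))
      (Ty.applyS (Subst.single 0 (.ty (.arrow (.tvar 0) (.uvar 2) (.uvar 1)))) (.uvar 1))
      (.join .pure (.join .pure (.uvar 2)))
      (((Subst.single 0 (.ty (.arrow (.tvar 0) (.uvar 2) (.uvar 1)))).comp idSubst).comp
        idSubst) ([] ++ [] ++ []) :=
    .app (xt := 1) (xe := 2) (.var rfl) (.var rfl) (by decide) (by decide) (by decide)
      (.uvarL (by decide) (.arrow _ (.tvar 0) (.uvar 1)))
  refine .lamU (z := 0) (by decide) (.lamD (b := 1) (f := fun _ => 0)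
    (.lam (.varTy rfl) happ) rfl (by decide) (by decide) ?_ rfl)
  intro i hi
  simp [constrIds, Eff.ids] at hi

/-- The inference algorithm is unsound: on λ̂f. Λα:type. λx:α. f x
in the empty environment it succeeds, returning (up to simplification of joins
with the pure effect) the type (α →x̂ ŷ) →∅ ∀α:type. α →x̂ ŷ with trivially
satisfiable constraints, the bound variable α (= 0) escaping its scope in the
returned type, even though the expression is not declaratively typable.
(Term variables: f = 0, x = 1; type variable: α = 0.) -/
theorem rInfer_unsound :
    ∃ (x y : ℕ) (θ : Subst) (C : List (Eff × Eff)) (E₁ E₂ : Eff) (T : Ty),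
      EffEquiv E₁ (.uvar x) ∧ EffEquiv E₂ (.uvar x) ∧
      T = .arrow (.arrow (.tvar 0) E₁ (.uvar y)) .pure
            (.all 0 .type (.arrow (.tvar 0) E₂ (.uvar y))) ∧
      RInfer []
        (.lamU 0 (.lamD 0 .type (.lam 1 (.tvar 0) (.app (.var 0) (.var 1)))))
        T .pure θ C ∧
      (∀ μ : EModel, Models μ C) ∧
      (0 : ℕ) ∈ T.fv ∧
      ¬ ∃ (τ : Ty) (ε : Eff),
          Typing []
            (.lamU 0 (.lamD 0 .type (.lam 1 (.tvar 0) (.app (.var 0) (.var 1)))))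
            τ ε :=
  ⟨2, 1, _, _, .uvar 2, .join .pure (.join .pure (.uvar 2)), _,
    .refl _, (EffEquiv.pureId _).trans (.pureId _), rfl,
    rInfer_escapeExpr,
    Models.of_forall_fst_eq_snd (by simp),
    by decide,
    not_typable_escapeExpr⟩
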